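/- arXiv:1704.00293 — 5 statements merged into one kernel-verified Lean document; each statement's English description precedes it below -/
import Mathlib

section
/- Let W be a committee of size k, w_i = |A_i ∩ W|, V an ℓ-cohesive group with average satisfaction at most ℓ-1, and c ∈ (⋂_{i∈V} A_i) \ W. Define for c' ∈ W the swap gain Δ(c,c') = pav-sc((W\{c'})∪{c}) − pav-sc(W). Then Σ_{c'∈W} Δ(c,c') ≥ (k+1)·Σ_{i∈V} 1/(w_i+1) − n ≥ n/k, and hence there exists c' ∈ W with Δ(c,c') ≥ n/k². -/
open Finset

/-- Average satisfaction of a group `V` of voters w.r.t. committee `W`: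
`(1/|V|) * Σ_{i∈V} |A_i ∩ W|`. -/
def avgSat {ι α : Type*} [DecidableEq α] (A : ι → Finset α) (W : Finset α)
    (V : Finset ι) : ℚ :=
  (∑ i ∈ V, ((A i ∩ W).card : ℚ)) / V.card

/-- `V` is an `ℓ`-cohesive group of voters (w.r.t. electorate `N` and committee size `k`):
`V ⊆ N`, `|V| ≥ ⌈ℓ·n/k⌉` and the voters in `V` jointly approve at least `ℓ` candidates. -/
def Cohesive {ι α : Type*} [DecidableEq α] (N : Finset ι) (A : ι → Finset α)
    (k ℓ : ℕ) (V : Finset ι) : Prop :=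
  V ⊆ N ∧ (⌈(ℓ * N.card : ℚ) / k⌉ : ℚ) ≤ V.card ∧
    ∃ T : Finset α, ℓ ≤ T.card ∧ ∀ i ∈ V, T ⊆ A i

/-- The PAV score of committee `W`: `Σ_{i∈N} Σ_{j=1}^{|A_i ∩ W|} 1/j`. -/
def pavSc {ι α : Type*} [DecidableEq α] (N : Finset ι) (A : ι → Finset α)
    (W : Finset α) : ℚ :=
  ∑ i ∈ N, ∑ j ∈ Finset.range (A i ∩ W).card, (1 : ℚ) / (j + 1)

/-- `W` provides extended justified representation: every `ℓ`-cohesive group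
contains a voter approving at least `ℓ` members of `W`. -/
def EJR {ι α : Type*} [DecidableEq α] (N : Finset ι) (A : ι → Finset α)
    (k : ℕ) (W : Finset α) : Prop :=
  ∀ ℓ : ℕ, 0 < ℓ → ∀ V : Finset ι, Cohesive N A k ℓ V → ∃ i ∈ V, ℓ ≤ (A i ∩ W).card


set_option maxHeartbeats 1000000

lemma two_le_div_add_div {a b : ℚ} (ha : 0 < a) (hb : 0 < b) : 2 ≤ a / b + b / a := by
  rw [div_add_div _ _ hb.ne' ha.ne', le_div_iff₀ (by positivity)]
  nlinarith [sq_nonneg (a - b)]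

lemma amhm {ι : Type*} [DecidableEq ι] (V : Finset ι) (x : ι → ℚ)
    (hx : ∀ i ∈ V, 0 < x i) :
    (V.card : ℚ) ^ 2 ≤ (∑ i ∈ V, x i) * (∑ i ∈ V, 1 / x i) := by
  induction V using Finset.induction_on with
  | empty => simp
  | @insert a s ha ih =>
    have hxa : 0 < x a := hx a (mem_insert_self a s)
    have hs : ∀ i ∈ s, 0 < x i := fun i hi => hx i (mem_insert_of_mem hi)
    have ih' := ih hs
    rw [Finset.sum_insert ha, Finset.sum_insert ha, Finset.card_insert_of_notMem ha]
    have key : 2 * (s.card : ℚ) ≤ ∑ i ∈ s, (x i / x a + x a / x i) := by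
      calc 2 * (s.card : ℚ) = ∑ _i ∈ s, (2 : ℚ) := by simp [mul_comm]
        _ ≤ _ := Finset.sum_le_sum fun i hi => two_le_div_add_div (hs i hi) hxa
    have split : ∑ i ∈ s, (x i / x a + x a / x i)
        = (∑ i ∈ s, x i) / x a + x a * (∑ i ∈ s, 1 / x i) := by
      rw [Finset.sum_add_distrib, Finset.sum_div, Finset.mul_sum]
      congr 1
      exact Finset.sum_congr rfl fun i hi => (mul_one_div _ _).symm
    rw [split] at key
    have expand : (x a + ∑ i ∈ s, x i) * (1 / x a + ∑ i ∈ s, 1 / x i)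
        = 1 + ((∑ i ∈ s, x i) / x a + x a * (∑ i ∈ s, 1 / x i))
          + (∑ i ∈ s, x i) * (∑ i ∈ s, 1 / x i) := by
      field_simp; ring
    rw [expand]
    push_cast
    nlinarith [ih', key]

lemma H_diff {α : Type*} [DecidableEq α] (Ai W : Finset α) (c c' : α)
    (hc : c ∉ W) (hc' : c' ∈ W) :
    (∑ j ∈ Finset.range (Ai ∩ insert c (W.erase c')).card, (1 : ℚ) / (j + 1))
      - ∑ j ∈ Finset.range (Ai ∩ W).card, (1 : ℚ) / (j + 1)
    = (if c ∈ Ai ∧ c' ∉ Ai then (1 : ℚ) / ((Ai ∩ W).card + 1) else 0)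
      - (if c' ∈ Ai ∧ c ∉ Ai then (1 : ℚ) / ((Ai ∩ W).card) else 0) := by
  by_cases hca : c ∈ Ai <;> by_cases hc'a : c' ∈ Ai
  · have hmem : c' ∈ Ai ∩ W := mem_inter.2 ⟨hc'a, hc'⟩
    have hcard : (Ai ∩ insert c (W.erase c')).card = (Ai ∩ W).card := by
      rw [inter_insert_of_mem hca, inter_erase,
        card_insert_of_notMem (fun h => hc (mem_of_mem_inter_right (mem_of_mem_erase h))),
        card_erase_of_mem hmem, Nat.sub_add_cancel (card_pos.2 ⟨c', hmem⟩)]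
    rw [hcard, if_neg (by simp [hc'a]), if_neg (by simp [hca])]
    ring
  · have hcard : (Ai ∩ insert c (W.erase c')).card = (Ai ∩ W).card + 1 := by
      rw [inter_insert_of_mem hca, inter_erase,
        erase_eq_of_notMem (fun h => hc'a (mem_of_mem_inter_left h)),
        card_insert_of_notMem (fun h => hc (mem_of_mem_inter_right h))]
    rw [hcard, Finset.sum_range_succ, if_pos ⟨hca, hc'a⟩, if_neg (by simp [hc'a, hca])]
    ring
  · have hmem : c' ∈ Ai ∩ W := mem_inter.2 ⟨hc'a, hc'⟩
    have hpos : 0 < (Ai ∩ W).card := card_pos.2 ⟨c', hmem⟩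
    have hcard : (Ai ∩ W).card = (Ai ∩ insert c (W.erase c')).card + 1 := by
      rw [inter_insert_of_notMem hca, inter_erase, card_erase_of_mem hmem,
        Nat.sub_add_cancel hpos]
    rw [hcard, Finset.sum_range_succ, if_neg (by simp [hca]), if_pos ⟨hc'a, hca⟩]
    push_cast
    ring
  · have hcard : (Ai ∩ insert c (W.erase c')).card = (Ai ∩ W).card := by
      rw [inter_insert_of_notMem hca, inter_erase,
        erase_eq_of_notMem (fun h => hc'a (mem_of_mem_inter_left h))]
    rw [hcard, if_neg (by simp [hca]), if_neg (by simp [hc'a])]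
    ring

/-- Total swap gain bound: for an ℓ-cohesive group V with average satisfaction at most
ℓ-1 and a jointly approved candidate c ∉ W, the sum over c' ∈ W of the swap gains
Δ(c,c') = pavSc((W minus c') plus c) − pavSc(W) is at least
(k+1)·Σ_{i∈V} 1/(w_i+1) − n, which is at least n/k; hence some swap gains n/k². -/
theorem total_swap_gain_bound {ι α : Type*} [DecidableEq α]
    (N : Finset ι) (A : ι → Finset α) (k ℓ : ℕ) (hk : 0 < k) (hℓ : 0 < ℓ)
    (W : Finset α) (hW : W.card = k) (V : Finset ι) (hcoh : Cohesive N A k ℓ V)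
    (havg : avgSat A W V ≤ (ℓ : ℚ) - 1)
    (c : α) (hcA : ∀ i ∈ V, c ∈ A i) (hcW : c ∉ W) :
    ((k : ℚ) + 1) * (∑ i ∈ V, (1 : ℚ) / ((A i ∩ W).card + 1)) - N.card
      ≤ ∑ c' ∈ W, (pavSc N A (insert c (W.erase c')) - pavSc N A W) ∧
    (N.card : ℚ) / k
      ≤ ((k : ℚ) + 1) * (∑ i ∈ V, (1 : ℚ) / ((A i ∩ W).card + 1)) - N.card ∧
    ∃ c' ∈ W, (N.card : ℚ) / k ^ 2
      ≤ pavSc N A (insert c (W.erase c')) - pavSc N A W := by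
  classical
  obtain ⟨hVN, hVcard, T, hT, hTA⟩ := hcoh
  set n := N.card with hn
  set v := V.card with hv
  -- Step 1: rewrite each swap gain as a sum over voters
  have hΔ : ∀ c' ∈ W, pavSc N A (insert c (W.erase c')) - pavSc N A W
      = ∑ i ∈ N, ((if c ∈ A i ∧ c' ∉ A i then (1 : ℚ) / ((A i ∩ W).card + 1) else 0)
        - (if c' ∈ A i ∧ c ∉ A i then (1 : ℚ) / ((A i ∩ W).card) else 0)) := by
    intro c' hc'
    unfold pavSc
    rw [← Finset.sum_sub_distrib]
    exact Finset.sum_congr rfl fun i _ => H_diff (A i) W c c' hcW hc'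
  have hswap : ∑ c' ∈ W, (pavSc N A (insert c (W.erase c')) - pavSc N A W)
      = ∑ i ∈ N, ∑ c' ∈ W,
        ((if c ∈ A i ∧ c' ∉ A i then (1 : ℚ) / ((A i ∩ W).card + 1) else 0)
          - (if c' ∈ A i ∧ c ∉ A i then (1 : ℚ) / ((A i ∩ W).card) else 0)) := by
    rw [Finset.sum_congr rfl hΔ]
    exact Finset.sum_comm
  -- Step 2: per-voter lower bound on the inner sum
  have hinner : ∀ i ∈ N,
      (if i ∈ V then ((k : ℚ) + 1) / ((A i ∩ W).card + 1) - 1 else -1)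
        ≤ ∑ c' ∈ W,
          ((if c ∈ A i ∧ c' ∉ A i then (1 : ℚ) / ((A i ∩ W).card + 1) else 0)
            - (if c' ∈ A i ∧ c ∉ A i then (1 : ℚ) / ((A i ∩ W).card) else 0)) := by
    intro i _
    rw [Finset.sum_sub_distrib]
    have hwk : (A i ∩ W).card ≤ k := hW ▸ card_le_card inter_subset_right
    have hfc : (W.filter (· ∉ A i)).card = k - (A i ∩ W).card := by
      have h1 := Finset.card_filter_add_card_filter_not
        (s := W) (p := (· ∈ A i))
      have h2 : (W.filter (· ∈ A i)).card = (A i ∩ W).card := by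
        rw [filter_mem_eq_inter, inter_comm]
      omega
    by_cases hci : c ∈ A i
    · have h2 : ∑ c' ∈ W,
          (if c' ∈ A i ∧ c ∉ A i then (1 : ℚ) / ((A i ∩ W).card) else 0) = 0 :=
        Finset.sum_eq_zero fun c' _ => if_neg (by tauto)
      have h1 : ∑ c' ∈ W,
          (if c ∈ A i ∧ c' ∉ A i then (1 : ℚ) / ((A i ∩ W).card + 1) else 0)
          = ((W.filter (· ∉ A i)).card : ℚ) * (1 / ((A i ∩ W).card + 1)) := by
        rw [← Finset.sum_filter_add_sum_filter_not W (· ∉ A i)]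
        have e1 : ∑ c' ∈ W.filter (· ∉ A i),
            (if c ∈ A i ∧ c' ∉ A i then (1 : ℚ) / ((A i ∩ W).card + 1) else 0)
            = ((W.filter (· ∉ A i)).card : ℚ) * (1 / ((A i ∩ W).card + 1)) := by
          rw [Finset.sum_congr rfl (fun c' hc' =>
            if_pos ⟨hci, (Finset.mem_filter.1 hc').2⟩), Finset.sum_const,
            nsmul_eq_mul, mul_one_div]
        have e2 : ∑ c' ∈ W.filter (fun x => ¬ x ∉ A i),
            (if c ∈ A i ∧ c' ∉ A i then (1 : ℚ) / ((A i ∩ W).card + 1) else 0) = 0 :=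
          Finset.sum_eq_zero fun c' hc' =>
            if_neg (fun h => (Finset.mem_filter.1 hc').2 h.2)
        rw [e1, e2, add_zero]
      rw [h1, h2]
      have hfcc : ((W.filter (· ∉ A i)).card : ℚ)
          = (k : ℚ) - (A i ∩ W).card := by
        rw [hfc, Nat.cast_sub hwk]
      by_cases hiV : i ∈ V
      · rw [if_pos hiV, hfcc]
        rw [sub_zero]
        have heq : ((k : ℚ) + 1) / (((A i ∩ W).card : ℚ) + 1) - 1
            = ((k : ℚ) - (A i ∩ W).card) * (1 / ((A i ∩ W).card + 1)) := by
          have hpos : (0 : ℚ) < ((A i ∩ W).card : ℚ) + 1 := by positivity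
          field_simp
          ring
        rw [heq]
      · rw [if_neg hiV, hfcc, sub_zero]
        have hnn : (0 : ℚ) ≤ ((k : ℚ) - (A i ∩ W).card) * (1 / ((A i ∩ W).card + 1)) := by
          have : (0 : ℚ) ≤ (k : ℚ) - (A i ∩ W).card := by
            have : ((A i ∩ W).card : ℚ) ≤ k := by exact_mod_cast hwk
            linarith
          positivity
        linarith
    · have hiV : i ∉ V := fun h => hci (hcA i h)
      rw [if_neg hiV]
      have h1 : ∑ c' ∈ W,
          (if c ∈ A i ∧ c' ∉ A i then (1 : ℚ) / ((A i ∩ W).card + 1) else 0) = 0 :=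
        Finset.sum_eq_zero fun c' _ => if_neg (by tauto)
      have h2 : ∑ c' ∈ W,
          (if c' ∈ A i ∧ c ∉ A i then (1 : ℚ) / ((A i ∩ W).card) else 0)
          = ((A i ∩ W).card : ℚ) * (1 / ((A i ∩ W).card)) := by
        rw [← Finset.sum_filter_add_sum_filter_not W (· ∈ A i)]
        have e1 : ∑ c' ∈ W.filter (· ∈ A i),
            (if c' ∈ A i ∧ c ∉ A i then (1 : ℚ) / ((A i ∩ W).card) else 0)
            = ((A i ∩ W).card : ℚ) * (1 / ((A i ∩ W).card)) := by
          rw [Finset.sum_congr rfl (fun c' hc' =>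
            if_pos ⟨(Finset.mem_filter.1 hc').2, hci⟩), Finset.sum_const,
            nsmul_eq_mul]
          congr 2
          rw [filter_mem_eq_inter, inter_comm]
        have e2 : ∑ c' ∈ W.filter (fun x => ¬ x ∈ A i),
            (if c' ∈ A i ∧ c ∉ A i then (1 : ℚ) / ((A i ∩ W).card) else 0) = 0 :=
          Finset.sum_eq_zero fun c' hc' =>
            if_neg (fun h => (Finset.mem_filter.1 hc').2 h.1)
        rw [e1, e2, add_zero]
      rw [h1, h2]
      have : ((A i ∩ W).card : ℚ) * (1 / ((A i ∩ W).card)) ≤ 1 := by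
        rcases Nat.eq_zero_or_pos (A i ∩ W).card with h | h
        · simp [h]
        · have h0 : ((A i ∩ W).card : ℚ) ≠ 0 := by positivity
          rw [mul_one_div, div_self h0]
      linarith
  -- Step 3: sum the per-voter bounds
  have hsplit : ∑ i ∈ N, (if i ∈ V then ((k : ℚ) + 1) / ((A i ∩ W).card + 1) - 1 else -1)
      = ((k : ℚ) + 1) * (∑ i ∈ V, (1 : ℚ) / ((A i ∩ W).card + 1)) - n := by
    rw [← Finset.sum_sdiff hVN]
    have e1 : ∑ i ∈ N \ V,
        (if i ∈ V then ((k : ℚ) + 1) / ((A i ∩ W).card + 1) - 1 else -1)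
        = -(((N \ V).card : ℚ)) := by
      rw [Finset.sum_congr rfl (fun i hi => if_neg (Finset.mem_sdiff.1 hi).2),
        Finset.sum_const, nsmul_eq_mul, mul_neg_one]
    have e2 : ∑ i ∈ V,
        (if i ∈ V then ((k : ℚ) + 1) / ((A i ∩ W).card + 1) - 1 else -1)
        = ((k : ℚ) + 1) * (∑ i ∈ V, (1 : ℚ) / ((A i ∩ W).card + 1)) - v := by
      rw [Finset.sum_congr rfl (fun i hi => if_pos hi), Finset.sum_sub_distrib,
        Finset.sum_const, nsmul_eq_mul, mul_one, Finset.mul_sum]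
      congr 1
      exact Finset.sum_congr rfl fun i _ => by rw [mul_one_div]
    rw [e1, e2, card_sdiff_of_subset hVN, Nat.cast_sub (card_le_card hVN)]
    ring
  have part1 : ((k : ℚ) + 1) * (∑ i ∈ V, (1 : ℚ) / ((A i ∩ W).card + 1)) - n
      ≤ ∑ c' ∈ W, (pavSc N A (insert c (W.erase c')) - pavSc N A W) := by
    rw [hswap, ← hsplit]
    exact Finset.sum_le_sum hinner
  -- Step 4: the AM-HM lower bound
  have hvn : (v : ℚ) ≤ n := by exact_mod_cast card_le_card hVN
  have hvceil : ((ℓ : ℚ) * n / k) ≤ v := le_trans (Int.le_ceil _) hVcard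
  have part2 : (n : ℚ) / k
      ≤ ((k : ℚ) + 1) * (∑ i ∈ V, (1 : ℚ) / ((A i ∩ W).card + 1)) - n := by
    have hinv_nonneg : (0 : ℚ) ≤ ∑ i ∈ V, (1 : ℚ) / ((A i ∩ W).card + 1) :=
      Finset.sum_nonneg fun i _ => by positivity
    rcases Nat.eq_zero_or_pos v with hv0 | hv0
    · have hn0 : (n : ℚ) = 0 := by
        have : ((ℓ : ℚ) * n / k) ≤ 0 := by rw [hv0] at hvceil; exact_mod_cast hvceil
        have hkpos : (0 : ℚ) < k := by exact_mod_cast hk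
        have hlpos : (0 : ℚ) < ℓ := by exact_mod_cast hℓ
        have hnn : (0 : ℚ) ≤ n := Nat.cast_nonneg n
        nlinarith [div_nonneg (mul_nonneg hlpos.le hnn) hkpos.le,
          (div_le_iff₀ hkpos).1 this]
      rw [hn0]
      have hkpos : (0 : ℚ) < k := by exact_mod_cast hk
      rw [zero_div]
      nlinarith
    · -- v > 0
      have hvpos : (0 : ℚ) < v := by exact_mod_cast hv0
      have hS : ∑ i ∈ V, ((A i ∩ W).card : ℚ) ≤ ((ℓ : ℚ) - 1) * v := by
        have := havg
        unfold avgSat at this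
        rw [div_le_iff₀ hvpos] at this
        exact_mod_cast this
      have hAM := amhm V (fun i => ((A i ∩ W).card : ℚ) + 1) (fun i _ => by positivity)
      have hsum1 : ∑ i ∈ V, (((A i ∩ W).card : ℚ) + 1)
          = (∑ i ∈ V, ((A i ∩ W).card : ℚ)) + v := by
        rw [Finset.sum_add_distrib, Finset.sum_const, nsmul_eq_mul, mul_one]
      have hle : ∑ i ∈ V, (((A i ∩ W).card : ℚ) + 1) ≤ (ℓ : ℚ) * v := by
        rw [hsum1]; linarith
      have hlpos : (0 : ℚ) < ℓ := by exact_mod_cast hℓ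
      have hkey : (v : ℚ) / ℓ ≤ ∑ i ∈ V, (1 : ℚ) / ((A i ∩ W).card + 1) := by
        rw [div_le_iff₀ hlpos]
        nlinarith [hAM, hle, hinv_nonneg, hvpos]
      have hkpos : (0 : ℚ) < k := by exact_mod_cast hk
      have h1 : (n : ℚ) / k ≤ (v : ℚ) / ℓ := by
        rw [div_le_div_iff₀ hkpos hlpos]
        have := hvceil
        rw [div_le_iff₀ hkpos] at this
        linarith
      have h2 : (n : ℚ) / k ≤ ∑ i ∈ V, (1 : ℚ) / ((A i ∩ W).card + 1) :=
        le_trans h1 hkey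
      have h3 : ((k : ℚ) + 1) * ((n : ℚ) / k)
          ≤ ((k : ℚ) + 1) * (∑ i ∈ V, (1 : ℚ) / ((A i ∩ W).card + 1)) :=
        mul_le_mul_of_nonneg_left h2 (by positivity)
      have h4 : ((k : ℚ) + 1) * ((n : ℚ) / k) = n + (n : ℚ) / k := by
        field_simp
      linarith
  refine ⟨part1, part2, ?_⟩
  -- Step 5: pigeonhole
  have hWne : W.Nonempty := card_pos.1 (hW ▸ hk)
  apply Finset.exists_le_of_sum_le hWne
  have hkpos : (0 : ℚ) < k := by exact_mod_cast hk
  have hconst : ∑ _c' ∈ W, ((n : ℚ) / k ^ 2) = (n : ℚ) / k := by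
    rw [Finset.sum_const, hW, nsmul_eq_mul]
    field_simp
  rw [hconst]
  linarith
end

section
/- If a committee W of size k is a local optimum of the PAV score in the sense that no single swap (removing c' ∈ W and adding c ∈ C\W) increases the PAV score by at least n/k², then for every positive integer ℓ and every ℓ-cohesive group V, the average satisfaction of V with respect to W is strictly greater than ℓ−1. -/
open Finset

lemma arith_final (n k d l : ℚ) (hk : 0 < k) (h1 : k*l ≤ n - d) (h2 : n/k ≤ d) :
    n/k^2 ≤ d - l := by
  have hn2 : n ≤ k*d := by rw [div_le_iff₀ hk] at h2; linarith
  rw [div_le_iff₀ (by positivity : (0:ℚ) < k^2)]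
  nlinarith [mul_le_mul_of_nonneg_left h1 hk.le, mul_nonneg hk.le (by linarith : (0:ℚ) ≤ k*d - n)]

lemma pav_insert {ι α : Type*} [DecidableEq α] (N : Finset ι) (A : ι → Finset α)
    (X : Finset α) (c : α) (hc : c ∉ X) :
    pavSc N A (insert c X) = pavSc N A X +
      ∑ i ∈ N, (if c ∈ A i then (1:ℚ)/((A i ∩ X).card + 1) else 0) := by
  unfold pavSc
  rw [← Finset.sum_add_distrib]
  refine Finset.sum_congr rfl fun i _ => ?_
  by_cases h : c ∈ A i
  · have h1 : A i ∩ insert c X = insert c (A i ∩ X) := Finset.inter_insert_of_mem h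
    have hcX : c ∉ A i ∩ X := fun h' => hc (Finset.mem_inter.1 h').2
    rw [h1, Finset.card_insert_of_notMem hcX, Finset.sum_range_succ, if_pos h]
  · rw [Finset.inter_insert_of_notMem h, if_neg h, add_zero]

/-- A committee that is locally optimal for PAV with threshold n/k² gives every
ℓ-cohesive group average satisfaction strictly greater than ℓ-1. -/
theorem local_optimum_high_average_satisfaction {ι α : Type*} [DecidableEq α]
    (N : Finset ι) (hN : N.Nonempty) (A : ι → Finset α) (C : Finset α)
    (hA : ∀ i ∈ N, A i ⊆ C) (k : ℕ) (hk : 0 < k)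
    (W : Finset α) (hWC : W ⊆ C) (hW : W.card = k)
    (hloc : ∀ c' ∈ W, ∀ c ∈ C \ W,
      pavSc N A (insert c (W.erase c')) < pavSc N A W + (N.card : ℚ) / k ^ 2) :
    ∀ ℓ : ℕ, 0 < ℓ → ∀ V : Finset ι, Cohesive N A k ℓ V →
      (ℓ : ℚ) - 1 < avgSat A W V := by
  intro ℓ hℓ V hV
  obtain ⟨hVN, hVcard, T, hT, hTA⟩ := hV
  have hkQ : (0:ℚ) < k := by exact_mod_cast hk
  have hℓQ : (0:ℚ) < ℓ := by exact_mod_cast hℓ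
  have hnQ : (0:ℚ) < N.card := by exact_mod_cast Finset.card_pos.2 hN
  have hVQ : (ℓ * N.card : ℚ) / k ≤ V.card := le_trans (Int.le_ceil _) hVcard
  have hVpos : (0:ℚ) < V.card := lt_of_lt_of_le (by positivity) hVQ
  by_cases hTW : T ⊆ W
  · -- every voter in V already has ≥ ℓ approved members of W
    have hx : ∀ i ∈ V, (ℓ:ℚ) ≤ (A i ∩ W).card := by
      intro i hi
      have : T ⊆ A i ∩ W := Finset.subset_inter (hTA i hi) hTW
      exact_mod_cast le_trans hT (Finset.card_le_card this)
    have hsum : (ℓ:ℚ) * V.card ≤ ∑ i ∈ V, ((A i ∩ W).card : ℚ) := by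
      calc (ℓ:ℚ) * V.card = ∑ _i ∈ V, (ℓ:ℚ) := by rw [Finset.sum_const, nsmul_eq_mul, mul_comm]
        _ ≤ _ := Finset.sum_le_sum hx
    unfold avgSat
    rw [lt_div_iff₀ hVpos]
    nlinarith
  · obtain ⟨c, hcT, hcW⟩ := Finset.not_subset.1 hTW
    have hVne : V.Nonempty := Finset.card_pos.1 (by exact_mod_cast hVpos)
    obtain ⟨i0, hi0⟩ := hVne
    have hcC : c ∈ C := hA i0 (hVN hi0) (hTA i0 hi0 hcT)
    have hcCW : c ∈ C \ W := Finset.mem_sdiff.2 ⟨hcC, hcW⟩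
    by_contra hcon
    push_neg at hcon
    have hsum : ∑ i ∈ V, ((A i ∩ W).card : ℚ) ≤ ((ℓ:ℚ) - 1) * V.card := by
      unfold avgSat at hcon
      exact (div_le_iff₀ hVpos).1 hcon
    set Δ : ℚ := ∑ i ∈ N, (if c ∈ A i then (1:ℚ)/((A i ∩ W).card + 1) else 0) with hΔdef
    -- lower bound on Δ
    have key : ∀ i ∈ V, ((2*ℓ - 1 : ℚ) - (A i ∩ W).card)/ℓ^2 ≤ 1/((A i ∩ W).card + 1) := by
      intro i _
      have hx0 : (0:ℚ) ≤ ((A i ∩ W).card : ℚ) := by positivity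
      rw [div_le_div_iff₀ (by positivity) (by positivity)]
      nlinarith [sq_nonneg ((ℓ:ℚ) - (A i ∩ W).card - 1)]
    have h1 : ∑ i ∈ V, ((2*ℓ - 1 : ℚ) - (A i ∩ W).card)/ℓ^2
        ≤ ∑ i ∈ V, (1:ℚ)/((A i ∩ W).card + 1) := Finset.sum_le_sum key
    have h2 : ∑ i ∈ V, ((2*ℓ - 1 : ℚ) - (A i ∩ W).card)/ℓ^2
        = ((2*ℓ - 1)*V.card - ∑ i ∈ V, ((A i ∩ W).card : ℚ))/ℓ^2 := by
      rw [← Finset.sum_div]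
      congr 1
      rw [Finset.sum_sub_distrib, Finset.sum_const, nsmul_eq_mul, mul_comm]
    have h3 : (V.card:ℚ)/ℓ ≤ ((2*ℓ - 1)*V.card - ∑ i ∈ V, ((A i ∩ W).card : ℚ))/ℓ^2 := by
      rw [div_le_div_iff₀ hℓQ (by positivity)]
      nlinarith
    have h4 : ∑ i ∈ V, (1:ℚ)/((A i ∩ W).card + 1) ≤ Δ := by
      have hsub : ∑ i ∈ V, (if c ∈ A i then (1:ℚ)/((A i ∩ W).card + 1) else 0) ≤ Δ := by
        refine Finset.sum_le_sum_of_subset_of_nonneg hVN fun i _ _ => ?_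
        split_ifs
        · positivity
        · exact le_rfl
      calc ∑ i ∈ V, (1:ℚ)/((A i ∩ W).card + 1)
          = ∑ i ∈ V, (if c ∈ A i then (1:ℚ)/((A i ∩ W).card + 1) else 0) := by
            refine Finset.sum_congr rfl fun i hi => ?_
            rw [if_pos (hTA i hi hcT)]
        _ ≤ Δ := hsub
    have hΔV : (V.card:ℚ)/ℓ ≤ Δ := le_trans h3 (le_trans (h2 ▸ h1) h4)
    have hΔn : (N.card:ℚ)/k ≤ Δ := by
      refine le_trans ?_ hΔV
      rw [div_le_div_iff₀ hkQ hℓQ]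
      nlinarith [hVQ, (div_le_iff₀ hkQ).1 hVQ]
    -- the committee W ∪ {c}
    set U := insert c W with hUdef
    set L : α → ℚ := fun c' => ∑ i ∈ N, (if c' ∈ A i then (1:ℚ)/((A i ∩ U).card) else 0)
      with hLdef
    have hLsum : ∑ c' ∈ W, L c' ≤ (N.card:ℚ) - Δ := by
      have swap : ∑ c' ∈ W, L c' = ∑ i ∈ N, ((A i ∩ W).card : ℚ)/((A i ∩ U).card) := by
        rw [hLdef]
        rw [Finset.sum_comm]
        refine Finset.sum_congr rfl fun i _ => ?_
        rw [Finset.sum_ite, Finset.sum_const, Finset.sum_const_zero, add_zero,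
          Finset.filter_mem_eq_inter, nsmul_eq_mul]
        rw [Finset.inter_comm]
        rw [mul_one_div]
      rw [swap]
      have hper : ∀ i ∈ N, ((A i ∩ W).card : ℚ)/((A i ∩ U).card)
          ≤ 1 - (if c ∈ A i then (1:ℚ)/((A i ∩ W).card + 1) else 0) := by
        intro i _
        by_cases h : c ∈ A i
        · have hU : A i ∩ U = insert c (A i ∩ W) := Finset.inter_insert_of_mem h
          have hcX : c ∉ A i ∩ W := fun h' => hcW (Finset.mem_inter.1 h').2
          rw [if_pos h, hU, Finset.card_insert_of_notMem hcX]
          have hx0 : (0:ℚ) < ((A i ∩ W).card : ℚ) + 1 := by positivity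
          push_cast
          have heq : ((A i ∩ W).card:ℚ)/(((A i ∩ W).card:ℚ)+1)
              + 1/(((A i ∩ W).card:ℚ)+1) = 1 := by
            rw [← add_div, div_self (ne_of_gt hx0)]
          linarith
        · rw [if_neg h, Finset.inter_insert_of_notMem h, sub_zero]
          rcases Nat.eq_zero_or_pos (A i ∩ W).card with h0 | h0
          · rw [h0]; norm_num
          · rw [div_self (Nat.cast_ne_zero.mpr h0.ne')]
      calc ∑ i ∈ N, ((A i ∩ W).card : ℚ)/((A i ∩ U).card)
          ≤ ∑ i ∈ N, (1 - (if c ∈ A i then (1:ℚ)/((A i ∩ W).card + 1) else 0)) :=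
            Finset.sum_le_sum hper
        _ = (N.card:ℚ) - Δ := by
            rw [Finset.sum_sub_distrib, Finset.sum_const, nsmul_eq_mul, mul_one, hΔdef]
    have hWne : W.Nonempty := Finset.card_pos.1 (hW ▸ hk)
    obtain ⟨c', hc'W, hc'min⟩ := Finset.exists_min_image W L hWne
    have hkL : (k:ℚ) * L c' ≤ (N.card:ℚ) - Δ := by
      refine le_trans ?_ hLsum
      have := Finset.card_nsmul_le_sum W L (L c') hc'min
      rw [hW, nsmul_eq_mul] at this
      exact_mod_cast this
    -- compute the pav score of the swapped committee
    have hUeq : pavSc N A U = pavSc N A W + Δ := pav_insert N A W c hcW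
    have hcc' : c ≠ c' := fun h => hcW (h ▸ hc'W)
    set S := insert c (W.erase c') with hSdef
    have hSU : (insert c W).erase c' = S := Finset.erase_insert_of_ne hcc'
    have hc'U : c' ∈ U := Finset.mem_insert_of_mem hc'W
    have hc'S : c' ∉ S := by
      rw [← hSU]; exact Finset.notMem_erase c' _
    have hins : insert c' S = U := by
      rw [← hSU, Finset.insert_erase hc'U]
    have hUeq2 : pavSc N A U = pavSc N A S +
        ∑ i ∈ N, (if c' ∈ A i then (1:ℚ)/((A i ∩ S).card + 1) else 0) := by
      rw [← hins]; exact pav_insert N A S c' hc'S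
    have hterm : ∑ i ∈ N, (if c' ∈ A i then (1:ℚ)/((A i ∩ S).card + 1) else 0) = L c' := by
      rw [hLdef]
      refine Finset.sum_congr rfl fun i _ => ?_
      by_cases h : c' ∈ A i
      · rw [if_pos h, if_pos h]
        have hmem : c' ∈ A i ∩ U := Finset.mem_inter.2 ⟨h, hc'U⟩
        have hAS : A i ∩ S = (A i ∩ U).erase c' := by
          rw [← hSU]
          ext x
          simp only [Finset.mem_inter, Finset.mem_erase]
          tauto
        have : (A i ∩ S).card + 1 = (A i ∩ U).card := by
          rw [hAS, Finset.card_erase_of_mem hmem,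
            Nat.sub_add_cancel (Finset.card_pos.2 ⟨c', hmem⟩)]
        rw [← this]
        push_cast
        ring_nf
      · rw [if_neg h, if_neg h]
    have hfin := hloc c' hc'W c hcCW
    rw [← hSdef] at hfin
    have hSval : pavSc N A S = pavSc N A W + Δ - L c' := by
      rw [hUeq2, hterm] at hUeq
      linarith
    clear_value Δ U L S
    have hgain : (N.card:ℚ)/k^2 ≤ Δ - L c' :=
      arith_final (N.card:ℚ) (k:ℚ) Δ (L c') hkQ hkL hΔn
    linarith only [hfin, hSval, hgain]
end

section
/- If a committee W provides EJR, then for every positive integer ℓ and every ℓ-cohesive group V, the average satisfaction of V with respect to W is at least (ℓ−1)/2. -/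
open Finset

theorem EJR_implies_half_average_satisfaction' {ι α : Type*} [DecidableEq α]
    (N : Finset ι) (hN : N.Nonempty) (A : ι → Finset α) (k : ℕ) (hk : 0 < k)
    (W : Finset α)
    (hejr : ∀ ℓ : ℕ, 0 < ℓ → ∀ V : Finset ι,
      (V ⊆ N ∧ (⌈(ℓ * N.card : ℚ) / k⌉ : ℚ) ≤ V.card ∧
        ∃ T : Finset α, ℓ ≤ T.card ∧ ∀ i ∈ V, T ⊆ A i) → ∃ i ∈ V, ℓ ≤ (A i ∩ W).card)
    (ℓ : ℕ) (hℓ : 0 < ℓ) (V : Finset ι)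
    (hVN : V ⊆ N) (hVcard : (⌈(ℓ * N.card : ℚ) / k⌉ : ℚ) ≤ V.card)
    (T : Finset α) (hT : ℓ ≤ T.card) (hTA : ∀ i ∈ V, T ⊆ A i) :
    ((ℓ : ℚ) - 1) / 2 ≤ (∑ i ∈ V, ((A i ∩ W).card : ℚ)) / V.card := by
  set sat : ι → ℕ := fun i => (A i ∩ W).card with hsatdef
  have hn : (0:ℚ) < N.card := by exact_mod_cast card_pos.mpr hN
  have hkq : (0:ℚ) < k := by exact_mod_cast hk
  have hlq : (0:ℚ) < ℓ := by exact_mod_cast hℓ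
  have hceilpos : (0:ℚ) < (⌈(ℓ * N.card : ℚ) / k⌉ : ℚ) := by
    have : (0:ℤ) < ⌈(ℓ * N.card : ℚ) / k⌉ := Int.ceil_pos.mpr (by positivity)
    exact_mod_cast this
  have hV0 : (0:ℚ) < V.card := lt_of_lt_of_le hceilpos hVcard
  -- per-threshold bound
  have key : ∀ t ∈ Icc 1 ℓ,
      ((V.card:ℚ) - t * N.card / k) ≤ ((V.filter (fun i => t ≤ sat i)).card : ℚ) := by
    intro t ht
    rw [mem_Icc] at ht
    set B := V.filter (fun i => ¬ t ≤ sat i) with hB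
    have hBlt : (B.card : ℚ) < t * N.card / k := by
      by_contra h
      push_neg at h
      have hceil : (⌈(t * N.card : ℚ)/k⌉ : ℚ) ≤ B.card := by
        have : ⌈(t * N.card : ℚ)/k⌉ ≤ (B.card:ℤ) := Int.ceil_le.mpr (by exact_mod_cast h)
        exact_mod_cast this
      obtain ⟨i, hiB, hit⟩ := hejr t ht.1 B
        ⟨(filter_subset _ _).trans hVN, hceil, T, le_trans ht.2 hT,
          fun i hi => hTA i (filter_subset _ _ hi)⟩
      exact (mem_filter.mp hiB).2 hit
    have hsplit : (V.filter (fun i => t ≤ sat i)).card + B.card = V.card :=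
      Finset.card_filter_add_card_filter_not (p := fun i => t ≤ sat i)
    have : ((V.filter (fun i => t ≤ sat i)).card : ℚ) + B.card = V.card := by
      exact_mod_cast hsplit
    linarith
  -- layer cake
  have layerN : ∑ t ∈ Icc 1 ℓ, (V.filter (fun i => t ≤ sat i)).card ≤ ∑ i ∈ V, sat i := by
    have h1 : ∀ t, (V.filter (fun i => t ≤ sat i)).card
        = ∑ i ∈ V, if t ≤ sat i then 1 else 0 := fun t => by
      rw [Finset.card_filter]
    simp_rw [h1]
    rw [Finset.sum_comm]
    refine Finset.sum_le_sum fun i _ => ?_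
    have : (∑ t ∈ Icc 1 ℓ, if t ≤ sat i then 1 else 0)
        = ((Icc 1 ℓ).filter (fun t => t ≤ sat i)).card := by
      rw [Finset.card_filter]
    rw [this]
    calc ((Icc 1 ℓ).filter (fun t => t ≤ sat i)).card
        ≤ (Icc 1 (sat i)).card := by
          apply Finset.card_le_card
          intro t htm
          rw [mem_filter, mem_Icc] at htm
          exact mem_Icc.mpr ⟨htm.1.1, htm.2⟩
      _ = sat i := by rw [Nat.card_Icc]; omega
  have layer : ∑ t ∈ Icc 1 ℓ, ((V.filter (fun i => t ≤ sat i)).card : ℚ)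
      ≤ ∑ i ∈ V, (sat i : ℚ) := by exact_mod_cast layerN
  -- n/k ≤ |V|/ℓ
  have hnk : (ℓ:ℚ) * N.card / k ≤ V.card :=
    le_trans (Int.le_ceil _) hVcard
  -- Gauss sum
  have gaussN : (∑ t ∈ Icc 1 ℓ, t) * 2 = ℓ * (ℓ + 1) := by
    have h1 : ∑ t ∈ Icc 1 ℓ, t = ∑ t ∈ range (ℓ+1), t := by
      rw [Finset.range_eq_Ico, ← Finset.Ico_add_one_right_eq_Icc]
      rw [Finset.sum_Ico_eq_sum_range, Finset.sum_Ico_eq_sum_range]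
      simp
      rw [Finset.sum_range_succ']
      simp [Nat.add_comm]
    rw [h1, Finset.sum_range_id_mul_two]
    simp [Nat.succ_sub_one, Nat.mul_comm]
  have gauss : (∑ t ∈ Icc 1 ℓ, (t:ℚ)) = ℓ * (ℓ + 1) / 2 := by
    have : ((∑ t ∈ Icc 1 ℓ, t : ℕ) : ℚ) * 2 = (ℓ:ℚ) * (ℓ + 1) := by exact_mod_cast gaussN
    push_cast at this ⊢
    linarith
  -- main chain
  have hlne : (ℓ:ℚ) ≠ 0 := hlq.ne'
  have hmain : ∑ t ∈ Icc 1 ℓ, ((V.card:ℚ) - t * V.card / ℓ) = ((ℓ:ℚ) - 1) / 2 * V.card := by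
    rw [Finset.sum_sub_distrib, Finset.sum_const, Nat.card_Icc, Nat.add_sub_cancel,
      nsmul_eq_mul]
    simp_rw [div_eq_mul_inv]
    rw [← Finset.sum_mul, ← Finset.sum_mul, gauss]
    field_simp
    ring
  rw [le_div_iff₀ hV0]
  calc ((ℓ:ℚ) - 1) / 2 * V.card
        = ∑ t ∈ Icc 1 ℓ, ((V.card:ℚ) - t * V.card / ℓ) := hmain.symm
      _ ≤ ∑ t ∈ Icc 1 ℓ, ((V.card:ℚ) - t * N.card / k) := by
          refine Finset.sum_le_sum fun t htm => ?_
          rw [mem_Icc] at htm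
          have ht0 : (0:ℚ) ≤ t := by positivity
          have : (t:ℚ) * N.card / k ≤ t * V.card / ℓ := by
            rw [div_le_div_iff₀ hkq hlq]
            have hnk2 : (ℓ:ℚ) * N.card ≤ V.card * k := by
              rw [div_le_iff₀ hkq] at hnk
              linarith
            nlinarith [mul_le_mul_of_nonneg_left hnk2 ht0]
          linarith
      _ ≤ ∑ t ∈ Icc 1 ℓ, ((V.filter (fun i => t ≤ sat i)).card : ℚ) :=
          Finset.sum_le_sum key
      _ ≤ ∑ i ∈ V, ((A i ∩ W).card : ℚ) := layer


/-- If W provides EJR, then every ℓ-cohesive group has average satisfaction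
at least (ℓ-1)/2 with respect to W. -/
theorem EJR_implies_half_average_satisfaction {ι α : Type*} [DecidableEq α]
    (N : Finset ι) (hN : N.Nonempty) (A : ι → Finset α) (k : ℕ) (hk : 0 < k)
    (W : Finset α) (hejr : EJR N A k W)
    (ℓ : ℕ) (hℓ : 0 < ℓ) (V : Finset ι) (hcoh : Cohesive N A k ℓ V) :
    ((ℓ : ℚ) - 1) / 2 ≤ avgSat A W V := by
  obtain ⟨hVN, hVcard, T, hT, hTA⟩ := hcoh
  exact EJR_implies_half_average_satisfaction' N hN A k hk W hejr ℓ hℓ V hVN hVcard T hT hTA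
end

section
/- In the election with 12 voters and 4 candidates {a,b,c,d}, where one voter approves {d,a}, one {a,b}, one {b,c}, one {c,d}, two approve {a}, two {b}, two {c}, and two {d}, with committee size k = 3: every set of 4 voters all approving a common candidate is 1-cohesive, and for every committee W of size 3 there is a 1-cohesive group whose average satisfaction with respect to W is at most 1/2. -/
open Finset

/-- Approval profile of the 12-voter election on candidates {a,b,c,d} = {0,1,2,3}. -/
def A9 (i : Fin 12) : Finset (Fin 4) :=
  match i.val with
  | 0 => {3, 0} | 1 => {0, 1} | 2 => {1, 2} | 3 => {2, 3}
  | 4 => {0} | 5 => {0} | 6 => {1} | 7 => {1}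
  | 8 => {2} | 9 => {2} | 10 => {3} | _ => {3}

lemma ceil_twelve : (⌈((1:ℕ) * ((Finset.univ : Finset (Fin 12)).card) : ℚ) / 3⌉ : ℚ) = 4 := by
  norm_num

lemma cohesive_of (V : Finset (Fin 12)) (h : V.card = 4) (x : Fin 4)
    (hx : ∀ i ∈ V, x ∈ A9 i) : Cohesive Finset.univ A9 3 1 V := by
  refine ⟨fun i _ => Finset.mem_univ i, ?_, {x}, by simp, fun i hi => by
    simpa using hx i hi⟩
  rw [h]; norm_num [Finset.card_univ]

/-- In the 12-voter election with k = 3: every set of 4 voters approving a common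
candidate is 1-cohesive, and every size-3 committee leaves some 1-cohesive group
with average satisfaction at most 1/2. -/
theorem square_example :
    (∀ V : Finset (Fin 12), V.card = 4 → (∃ x : Fin 4, ∀ i ∈ V, x ∈ A9 i) →
      Cohesive Finset.univ A9 3 1 V) ∧
    ∀ W : Finset (Fin 4), W.card = 3 →
      ∃ V : Finset (Fin 12), Cohesive Finset.univ A9 3 1 V ∧ avgSat A9 W V ≤ 1 / 2 := by
  constructor
  · rintro V hV ⟨x, hx⟩
    exact cohesive_of V hV x hx
  · intro W hW
    have hx : ∃ x : Fin 4, x ∉ W := by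
      by_contra h
      push_neg at h
      have : W = Finset.univ := Finset.eq_univ_of_forall h
      simp [this] at hW
    obtain ⟨x, hx⟩ := hx
    have hWeq : W = Finset.univ.erase x := by
      apply Finset.eq_of_subset_of_card_le
      · intro y hy
        exact Finset.mem_erase.2 ⟨fun h => hx (h ▸ hy), Finset.mem_univ y⟩
      · rw [Finset.card_erase_of_mem (Finset.mem_univ x)]
        simp [hW]
    subst hWeq
    fin_cases x
    · exact ⟨{0, 1, 4, 5}, cohesive_of _ (by decide) 0 (by decide), by
        simp [avgSat, Finset.sum_insert, A9]; norm_num⟩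
    · exact ⟨{1, 2, 6, 7}, cohesive_of _ (by decide) 1 (by decide), by
        simp [avgSat, Finset.sum_insert, A9]; norm_num⟩
    · exact ⟨{2, 3, 8, 9}, cohesive_of _ (by decide) 2 (by decide), by
        simp [avgSat, Finset.sum_insert, A9]; norm_num⟩
    · exact ⟨{0, 3, 10, 11}, cohesive_of _ (by decide) 3 (by decide), by
        simp [avgSat, Finset.sum_insert, A9]; norm_num⟩
end

section
/- For every positive integer k ≥ 3, consider the election with k+1 candidates c_1,…,c_{k+1} arranged in a cycle, one voter approving {c_j, c_{j+1}} for each j (indices mod k+1), and k−1 voters approving only {c_j} for each j, with n = (k+1)k voters total. Then for every committee W of size k, there exists a 1-cohesive group whose average satisfaction with respect to W is at most 2/k. -/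
open Finset

/-- Approval profile of the cyclic election: candidates are Fin (k+1); voter (j, 0)
approves {c_j, c_{j+1}} (cyclically), and voters (j, i) for i ≠ 0 approve only {c_j}. -/
def A10 (k : ℕ) (p : Fin (k + 1) × Fin k) : Finset (Fin (k + 1)) :=
  if p.2.val = 0 then {p.1, p.1 + 1} else {p.1}

/-- In the cyclic election with k+1 candidates and n = (k+1)k voters, every size-k
committee leaves some 1-cohesive group with average satisfaction at most 2/k. -/
theorem cyclic_example (k : ℕ) (hk : 3 ≤ k) :
    ∀ W : Finset (Fin (k + 1)), W.card = k →
      ∃ V : Finset (Fin (k + 1) × Fin k), Cohesive Finset.univ (A10 k) k 1 V ∧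
        avgSat (A10 k) W V ≤ 2 / (k : ℚ) := by
  intro W hW
  have hkpos : 0 < k := by omega
  set z : Fin k := ⟨0, hkpos⟩ with hz
  -- there is a candidate not in W
  have hWne : W ≠ Finset.univ := by
    intro h
    rw [h, Finset.card_univ, Fintype.card_fin] at hW
    omega
  obtain ⟨c, -, hc⟩ := Finset.exists_of_ssubset (Finset.ssubset_univ_iff.mpr hWne)
  have hone : (1 : Fin (k+1)) ≠ 0 := by
    intro h
    have := congrArg Fin.val h
    simp [Fin.val_one', Nat.mod_eq_of_lt (show 1 < k + 1 by omega)] at this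
  have hcne : c - 1 ≠ c := fun h => hone (sub_eq_self.mp h)
  have hsac : c - 1 + 1 = c := by
    rw [sub_add_cancel]
  -- the group: all approvers of c
  set V : Finset (Fin (k+1) × Fin k) :=
    insert (c - 1, z) ((Finset.univ : Finset (Fin k)).image (fun i => (c, i)))
    with hV
  have hinj : Function.Injective (fun i : Fin k => ((c, i) : Fin (k+1) × Fin k)) := by
    intro a b h; exact (Prod.mk.injEq _ _ _ _ ▸ h).2
  have hnotmem : (c - 1, z) ∉
      (Finset.univ : Finset (Fin k)).image (fun i => ((c, i) : Fin (k+1) × Fin k)) := by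
    simp only [Finset.mem_image, Finset.mem_univ, true_and]
    rintro ⟨i, h⟩
    exact hcne (congrArg Prod.fst h).symm
  have hA1 : A10 k (c - 1, z) = {c - 1, c} := by
    unfold A10; rw [if_pos rfl, hsac]
  have hA2 : A10 k (c, z) = {c, c + 1} := by
    unfold A10; rw [if_pos rfl]
  have hA3 : ∀ i : Fin k, i.val ≠ 0 → A10 k (c, i) = {c} := by
    intro i h; unfold A10; rw [if_neg h]
  have hVcard : V.card = k + 1 := by
    rw [hV, Finset.card_insert_of_notMem hnotmem, Finset.card_image_of_injective _ hinj]
    simp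
  refine ⟨V, ⟨Finset.subset_univ _, ?_, ⟨{c}, by simp, ?_⟩⟩, ?_⟩
  · -- cardinality condition
    have hN : (Finset.univ : Finset (Fin (k+1) × Fin k)).card = (k+1) * k := by
      simp [Finset.card_univ]
    rw [hN, hVcard]
    push_cast
    have hkq : (k : ℚ) ≠ 0 := by positivity
    have heq : (1 : ℚ) * ((↑k + 1) * ↑k) / ↑k = (k : ℚ) + 1 := by
      field_simp
    rw [heq, show ((k : ℚ) + 1) = ((k + 1 : ℕ) : ℚ) by push_cast; ring, Int.ceil_natCast]
    simp
  · -- everyone in V approves c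
    intro p hp
    rw [hV, Finset.mem_insert] at hp
    rcases hp with h | h
    · subst h
      rw [hA1]; simp
    · simp only [Finset.mem_image, Finset.mem_univ, true_and] at h
      obtain ⟨i, rfl⟩ := h
      by_cases hi : i.val = 0
      · have : i = z := Fin.ext hi
        rw [this, hA2]; simp
      · rw [hA3 i hi]
  · -- average satisfaction bound
    have hsum : (∑ p ∈ V, ((A10 k p ∩ W).card : ℚ)) ≤ 2 := by
      rw [hV, Finset.sum_insert hnotmem, Finset.sum_image (fun a _ b _ h => hinj h)]
      have h1 : ((A10 k (c - 1, z) ∩ W).card : ℚ) ≤ 1 := by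
        have hsub : A10 k (c - 1, z) ∩ W ⊆ {c - 1} := by
          intro x hx
          rw [hA1] at hx
          simp only [Finset.mem_inter, Finset.mem_insert, Finset.mem_singleton] at hx
          rcases hx.1 with h | h
          · simp [h]
          · exact absurd (h ▸ hx.2) hc
        have := Finset.card_le_card hsub
        simp only [Finset.card_singleton] at this
        exact_mod_cast this
      have h2 : (∑ i : Fin k, ((A10 k (c, i) ∩ W).card : ℚ)) ≤ 1 := by
        have hb : ∀ i : Fin k, ((A10 k (c, i) ∩ W).card : ℚ) ≤
            if i = z then 1 else 0 := by
          intro i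
          by_cases hi : i = z
          · rw [if_pos hi]
            have hsub : A10 k (c, i) ∩ W ⊆ {c + 1} := by
              intro x hx
              rw [hi, hA2] at hx
              simp only [Finset.mem_inter, Finset.mem_insert, Finset.mem_singleton] at hx
              rcases hx.1 with h | h
              · exact absurd (h ▸ hx.2) hc
              · simp [h]
            have := Finset.card_le_card hsub
            simp only [Finset.card_singleton] at this
            exact_mod_cast this
          · rw [if_neg hi]
            have hi' : i.val ≠ 0 := fun h => hi (Fin.ext h)
            have he : A10 k (c, i) ∩ W = ∅ := by
              rw [hA3 i hi', Finset.singleton_inter_of_notMem hc]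
            simp [he]
        calc (∑ i : Fin k, ((A10 k (c, i) ∩ W).card : ℚ))
            ≤ ∑ i : Fin k, (if i = z then (1 : ℚ) else 0) :=
              Finset.sum_le_sum (fun i _ => hb i)
          _ = 1 := by
              rw [Finset.sum_ite_eq' Finset.univ z (fun _ => (1 : ℚ))]
              simp
      linarith
    have hsumnn : (0 : ℚ) ≤ ∑ p ∈ V, ((A10 k p ∩ W).card : ℚ) :=
      Finset.sum_nonneg (fun p _ => by positivity)
    rw [avgSat, hVcard]
    have hk1 : (0 : ℚ) < ((k + 1 : ℕ) : ℚ) := by positivity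
    have hkq : (0 : ℚ) < (k : ℚ) := by exact_mod_cast hkpos
    calc (∑ p ∈ V, ((A10 k p ∩ W).card : ℚ)) / ((k + 1 : ℕ) : ℚ)
        ≤ 2 / ((k + 1 : ℕ) : ℚ) := by gcongr
      _ ≤ 2 / (k : ℚ) := by
          apply div_le_div_of_nonneg_left (by norm_num) hkq
          push_cast; linarith
end
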